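/- Let f, g be independent square-integrable random vectors in ℝⁿ with means μ_f, μ_g and covariances C_f, C_g, and let Q be a symmetric n×n real matrix. Then Var[fᵀ Q g] = tr[Q C_f Q C_g + Q (μ_f μ_fᵀ) Q C_g + Q C_f Q (μ_g μ_gᵀ)]. -/

import Mathlib

open MeasureTheory Matrix ProbabilityTheory

/-! Expanding `fᵀ Q g = ∑ Q_ij f_i g_j`, independence factors `E[(fᵀ Q g)²]` into
`∑ Q_ij Q_kl E[f_i f_k] E[g_j g_l] = tr(Q S_f Q S_g)`, where `S = C + μ μᵀ` is the second-moment
matrix, while `(E[fᵀ Q g])² = (μ_fᵀ Q μ_g)² = tr(Q (μ_f μ_fᵀ) Q (μ_g μ_gᵀ))`. Expanding `S_f` and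
`S_g` in the first trace, the last term cancels. -/

namespace Matrix
variable {ι R : Type*} [Fintype ι] [CommSemiring R]

lemma dotProduct_mulVec_eq_sum_prod (x y : ι → R) (Q : Matrix ι ι R) :
    x ⬝ᵥ Q *ᵥ y = ∑ p : ι × ι, Q p.1 p.2 * (x p.1 * y p.2) := by
  simp only [dotProduct, mulVec, Finset.mul_sum, Fintype.sum_prod_type]
  exact Fintype.sum_congr _ _ fun i => Fintype.sum_congr _ _ fun j => by ring

lemma sq_dotProduct_mulVec_eq_sum_prod (x y : ι → R) (Q : Matrix ι ι R) :
    (x ⬝ᵥ Q *ᵥ y) ^ 2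
      = ∑ p : ι × ι, ∑ q : ι × ι, Q p.1 p.2 * Q q.1 q.2 * ((x p.1 * x q.1) * (y p.2 * y q.2)) := by
  rw [sq, dotProduct_mulVec_eq_sum_prod, Finset.sum_mul_sum]
  exact Fintype.sum_congr _ _ fun p => Fintype.sum_congr _ _ fun q => by ring

lemma trace_transpose_mul_mul_mul_transpose (Q A B : Matrix ι ι R) :
    (Qᵀ * A * Q * Bᵀ).trace
      = ∑ p : ι × ι, ∑ q : ι × ι, Q p.1 p.2 * Q q.1 q.2 * (A p.1 q.1 * B p.2 q.2) := by
  simp only [trace, diag, mul_apply, transpose_apply, Finset.sum_mul, Fintype.sum_prod_type]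
  refine (Fintype.sum_congr _ _ fun _ => Fintype.sum_congr _ _ fun _ => Finset.sum_comm).trans ?_
  refine (Fintype.sum_congr _ _ fun _ => Finset.sum_comm).trans ?_
  refine (Fintype.sum_congr _ _ fun _ => Fintype.sum_congr _ _ fun _ => Finset.sum_comm).trans ?_
  rw [Finset.sum_comm]
  exact Fintype.sum_congr _ _ fun _ => Fintype.sum_congr _ _ fun _ =>
    Fintype.sum_congr _ _ fun _ => Fintype.sum_congr _ _ fun _ => by ring

lemma sq_dotProduct_mulVec_eq_trace (x y : ι → R) (Q : Matrix ι ι R) :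
    (x ⬝ᵥ Q *ᵥ y) ^ 2 = (Qᵀ * vecMulVec x x * Q * (vecMulVec y y)ᵀ).trace := by
  simp only [sq_dotProduct_mulVec_eq_sum_prod, trace_transpose_mul_mul_mul_transpose,
    vecMulVec_apply]

end Matrix

namespace ProbabilityTheory
variable {Ω ι : Type*} [MeasurableSpace Ω] {μ : Measure Ω} {f g : Ω → ι → ℝ}

noncomputable def secondMomentMatrix (f : Ω → ι → ℝ) (μ : Measure Ω) : Matrix ι ι ℝ :=
  Matrix.of fun i j => ∫ ω, f ω i * f ω j ∂μ

lemma secondMomentMatrix_transpose : (secondMomentMatrix f μ)ᵀ = secondMomentMatrix f μ := by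
  ext i j
  simp only [secondMomentMatrix, transpose_apply, of_apply, mul_comm]

lemma secondMomentMatrix_eq_add [IsProbabilityMeasure μ] (hf : ∀ i, MemLp (fun ω => f ω i) 2 μ) :
    secondMomentMatrix f μ
      = Matrix.of (fun i j => cov[fun ω => f ω i, fun ω => f ω j; μ])
        + vecMulVec (fun i => ∫ ω, f ω i ∂μ) (fun i => ∫ ω, f ω i ∂μ) := by
  ext i j
  rw [Matrix.add_apply, of_apply, vecMulVec_apply, covariance_eq_sub (hf i) (hf j), sub_add_cancel]
  rfl

variable [Fintype ι]

lemma IndepFun.integral_dotProduct_mulVec (hfg : IndepFun f g μ)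
    (hf : ∀ i, Integrable (fun ω => f ω i) μ) (hg : ∀ i, Integrable (fun ω => g ω i) μ)
    (Q : Matrix ι ι ℝ) :
    ∫ ω, f ω ⬝ᵥ Q *ᵥ g ω ∂μ
      = (fun i => ∫ ω, f ω i ∂μ) ⬝ᵥ Q *ᵥ (fun j => ∫ ω, g ω j ∂μ) := by
  have hindep : ∀ i j, IndepFun (fun ω => f ω i) (fun ω => g ω j) μ := fun i j =>
    hfg.comp (measurable_pi_apply i) (measurable_pi_apply j)
  have hint : ∀ i j, Integrable (fun ω => f ω i * g ω j) μ := fun i j =>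
    (hindep i j).integrable_mul (hf i) (hg j)
  simp_rw [dotProduct_mulVec_eq_sum_prod]
  rw [integral_finsetSum _ fun p _ => (hint p.1 p.2).const_mul _]
  refine Fintype.sum_congr _ _ fun p => ?_
  rw [integral_const_mul, (hindep p.1 p.2).integral_fun_mul_eq_mul_integral
    (hf p.1).aestronglyMeasurable (hg p.2).aestronglyMeasurable]

lemma IndepFun.integral_sq_dotProduct_mulVec (hfg : IndepFun f g μ)
    (hf : ∀ i, MemLp (fun ω => f ω i) 2 μ) (hg : ∀ i, MemLp (fun ω => g ω i) 2 μ)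
    (Q : Matrix ι ι ℝ) :
    ∫ ω, (f ω ⬝ᵥ Q *ᵥ g ω) ^ 2 ∂μ
      = (Qᵀ * secondMomentMatrix f μ * Q * (secondMomentMatrix g μ)ᵀ).trace := by
  have hindep : ∀ i k j l,
      IndepFun (fun ω => f ω i * f ω k) (fun ω => g ω j * g ω l) μ := fun i k j l =>
    hfg.comp ((measurable_pi_apply i).mul (measurable_pi_apply k))
      ((measurable_pi_apply j).mul (measurable_pi_apply l))
  have hfint : ∀ i k, Integrable (fun ω => f ω i * f ω k) μ := fun i k =>
    (hf i).integrable_mul (hf k)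
  have hgint : ∀ j l, Integrable (fun ω => g ω j * g ω l) μ := fun j l =>
    (hg j).integrable_mul (hg l)
  have hint : ∀ i k j l, Integrable (fun ω => (f ω i * f ω k) * (g ω j * g ω l)) μ :=
    fun i k j l => (hindep i k j l).integrable_mul (hfint i k) (hgint j l)
  simp_rw [sq_dotProduct_mulVec_eq_sum_prod, trace_transpose_mul_mul_mul_transpose]
  rw [integral_finsetSum _ fun p _ => integrable_finsetSum _ fun q _ => (hint _ _ _ _).const_mul _]
  refine Fintype.sum_congr _ _ fun p => ?_
  rw [integral_finsetSum _ fun q _ => (hint _ _ _ _).const_mul _]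
  refine Fintype.sum_congr _ _ fun q => ?_
  rw [integral_const_mul, (hindep _ _ _ _).integral_fun_mul_eq_mul_integral
    (hfint _ _).aestronglyMeasurable (hgint _ _).aestronglyMeasurable]
  rfl

end ProbabilityTheory

theorem stmt8 {Ω : Type*} [MeasurableSpace Ω] (μ : Measure Ω) [IsProbabilityMeasure μ]
    (n : ℕ) (f g : Ω → (Fin n → ℝ))
    (hf2 : ∀ k, MemLp (fun ω => f ω k) 2 μ)
    (hg2 : ∀ k, MemLp (fun ω => g ω k) 2 μ)
    (hind : IndepFun f g μ)
    (μf μg : Fin n → ℝ)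
    (hμf : ∀ k, μf k = ∫ ω, f ω k ∂μ)
    (hμg : ∀ k, μg k = ∫ ω, g ω k ∂μ)
    (Cf Cg : Matrix (Fin n) (Fin n) ℝ)
    (hCf : ∀ i j, Cf i j = ∫ ω, (f ω i - μf i) * (f ω j - μf j) ∂μ)
    (hCg : ∀ i j, Cg i j = ∫ ω, (g ω i - μg i) * (g ω j - μg j) ∂μ)
    (Q : Matrix (Fin n) (Fin n) ℝ) (hQ : Q.IsSymm) :
    (∫ ω, ((f ω) ⬝ᵥ Q.mulVec (g ω)) ^ 2 ∂μ)
      - (∫ ω, (f ω) ⬝ᵥ Q.mulVec (g ω) ∂μ) ^ 2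
      = (Q * Cf * Q * Cg + Q * vecMulVec μf μf * Q * Cg
          + Q * Cf * Q * vecMulVec μg μg).trace := by
  obtain rfl : μf = fun k => ∫ ω, f ω k ∂μ := funext hμf
  obtain rfl : μg = fun k => ∫ ω, g ω k ∂μ := funext hμg
  obtain rfl : Cf = Matrix.of fun i j => cov[fun ω => f ω i, fun ω => f ω j; μ] := Matrix.ext hCf
  obtain rfl : Cg = Matrix.of fun i j => cov[fun ω => g ω i, fun ω => g ω j; μ] := Matrix.ext hCg
  rw [hind.integral_sq_dotProduct_mulVec hf2 hg2,
    hind.integral_dotProduct_mulVec (fun i => (hf2 i).integrable one_le_two)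
      (fun i => (hg2 i).integrable one_le_two),
    sq_dotProduct_mulVec_eq_trace, secondMomentMatrix_transpose, secondMomentMatrix_eq_add hf2,
    secondMomentMatrix_eq_add hg2, transpose_vecMulVec, hQ.eq]
  simp only [Matrix.mul_add, Matrix.add_mul, trace_add]
  ring
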